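/- Let L be a bounded lattice, a ∈ L \ {0,1}, T₁ a t-subnorm on [a,1] and T₂ a t-subnorm on [0,a], with T₂(z ∧ a, a) = z ∧ a for all z incomparable with a. Then the ordinal sum T (as in the formula) is associative: T(x, T(y,z)) = T(T(x,y), z) for all x, y, z ∈ L. -/
import Mathlib


open Classical in
/-- The ordinal sum of two binary operations `T₁` (on `[a,1]`) and `T₂` (on `[0,a]`)
on a bounded lattice, in the sense of Ertuğrul and Yeşilyurt (formula (2) of the paper):
`T₁` on `[a,1)²`, `T₂` on `[0,a)²`, the meet on the mixed blocks and when `1 ∈ {x,y}`,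
and `T₂(x ⊓ a, y ⊓ a)` otherwise. -/
noncomputable def ordinalSum {L : Type*} [Lattice L] [BoundedOrder L]
    (a : L) (T₁ T₂ : L → L → L) (x y : L) : L :=
  if (a ≤ x ∧ x < ⊤) ∧ (a ≤ y ∧ y < ⊤) then T₁ x y
  else if x < a ∧ y < a then T₂ x y
  else if (x < a ∧ a ≤ y ∧ y < ⊤) ∨ ((a ≤ x ∧ x < ⊤) ∧ y < a) ∨ y = ⊤ ∨ x = ⊤ then x ⊓ y
  else T₂ (x ⊓ a) (y ⊓ a)

set_option linter.unusedSectionVars false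
noncomputable def Fop {L : Type*} [Lattice L] [DecidableEq L] (a : L) (T₂ : L → L → L) (u v : L) : L :=
  if u = a then v else if v = a then u else T₂ u v

section Aux
variable {L : Type*} [Lattice L] [BoundedOrder L] [DecidableEq L] (a : L) (T₁ T₂ : L → L → L)

lemma Fop_a_left (v : L) : Fop a T₂ a v = v := if_pos rfl

lemma Fop_le (hT₂le : ∀ x y, x ≤ a → y ≤ a → T₂ x y ≤ x ⊓ y)
    {u v : L} (hu : u ≤ a) (hv : v ≤ a) : Fop a T₂ u v ≤ u ⊓ v := by
  unfold Fop
  split_ifs with h1 h2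
  · subst h1; simp [hv]
  · subst h2; simp [hu]
  · exact hT₂le u v hu hv

lemma Fop_pos {u : L} (v : L) (h : u = a) : Fop a T₂ u v = v := if_pos h

lemma Fop_mid {u v : L} (h1 : u ≠ a) (h2 : v = a) : Fop a T₂ u v = u := by
  unfold Fop; rw [if_neg h1, if_pos h2]

lemma Fop_negneg {u v : L} (h1 : u ≠ a) (h2 : v ≠ a) : Fop a T₂ u v = T₂ u v := by
  unfold Fop; rw [if_neg h1, if_neg h2]

lemma Fop_assoc (hT₂assoc : ∀ x y z, x ≤ a → y ≤ a → z ≤ a → T₂ (T₂ x y) z = T₂ x (T₂ y z))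
    (hT₂le : ∀ x y, x ≤ a → y ≤ a → T₂ x y ≤ x ⊓ y)
    {u v w : L} (hu : u ≤ a) (hv : v ≤ a) (hw : w ≤ a) :
    Fop a T₂ (Fop a T₂ u v) w = Fop a T₂ u (Fop a T₂ v w) := by
  by_cases h1 : u = a
  · rw [Fop_pos a T₂ v h1, Fop_pos a T₂ (Fop a T₂ v w) h1]
  · by_cases h2 : v = a
    · rw [Fop_mid a T₂ h1 h2, Fop_pos a T₂ w h2]
    · have hTuv : T₂ u v ≠ a := by
        intro hh
        have h3 : a ≤ u := by
          have := (hT₂le u v hu hv).trans inf_le_left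
          rwa [hh] at this
        exact h1 (le_antisymm hu h3)
      by_cases h3 : w = a
      · rw [Fop_negneg a T₂ h1 h2, Fop_mid a T₂ hTuv h3, Fop_mid a T₂ h2 h3,
          Fop_negneg a T₂ h1 h2]
      · have hTvw : T₂ v w ≠ a := by
          intro hh
          have h4 : a ≤ v := by
            have := (hT₂le v w hv hw).trans inf_le_left
            rwa [hh] at this
          exact h2 (le_antisymm hv h4)
        rw [Fop_negneg a T₂ h1 h2, Fop_negneg a T₂ h2 h3, Fop_negneg a T₂ hTuv h3,
          Fop_negneg a T₂ h1 hTvw]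
        exact hT₂assoc u v w hu hv hw

lemma ordinalSum_top_left (y : L) : ordinalSum a T₁ T₂ ⊤ y = y := by
  simp [ordinalSum, not_top_lt]

lemma ordinalSum_top_right (x : L) : ordinalSum a T₁ T₂ x ⊤ = x := by
  simp [ordinalSum, not_top_lt]

lemma ordinalSum_AA {x y : L} (hx : a ≤ x) (hx' : x < ⊤) (hy : a ≤ y) (hy' : y < ⊤) :
    ordinalSum a T₁ T₂ x y = T₁ x y := by
  rw [ordinalSum, if_pos ⟨⟨hx, hx'⟩, ⟨hy, hy'⟩⟩]

lemma ordinalSum_low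
    (hT₂comm : ∀ x y, x ≤ a → y ≤ a → T₂ x y = T₂ y x)
    (hIa : ∀ z : L, ¬ z ≤ a → ¬ a ≤ z → T₂ (z ⊓ a) a = z ⊓ a)
    {x y : L} (hx : x ≠ ⊤) (hy : y ≠ ⊤) (h : ¬ (a ≤ x ∧ a ≤ y)) :
    ordinalSum a T₁ T₂ x y = Fop a T₂ (x ⊓ a) (y ⊓ a) := by
  have hx' : x < ⊤ := lt_top_iff_ne_top.2 hx
  have hy' : y < ⊤ := lt_top_iff_ne_top.2 hy
  rw [ordinalSum, if_neg (by tauto)]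
  by_cases hax : a ≤ x
  · -- x in A, hence ¬ a ≤ y
    have hay : ¬ a ≤ y := fun hh => h ⟨hax, hh⟩
    have hnxa : ¬ x < a := fun hh => hay (absurd (lt_of_le_of_lt hax hh) (lt_irrefl a))
    have hxa : x ⊓ a = a := inf_eq_right.2 hax
    by_cases hya : y < a
    · rw [if_neg (fun hh => hnxa hh.1), if_pos (Or.inr (Or.inl ⟨⟨hax, hx'⟩, hya⟩))]
      rw [hxa, Fop_a_left, inf_eq_left.2 hya.le, inf_eq_right.2 (hya.le.trans hax)]
    · -- y incomparable with a
      have hyla : ¬ y ≤ a := fun hh => hya (lt_of_le_of_ne hh (fun he => hay (he ▸ le_refl a)))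
      rw [if_neg (fun hh => hnxa hh.1)]
      rw [if_neg (by rintro (⟨h1, _⟩ | ⟨_, h1⟩ | h1 | h1) <;> [exact hnxa h1; exact hya h1; exact hy h1; exact hx h1])]
      rw [hxa, Fop_a_left]
      rw [hT₂comm a (y ⊓ a) le_rfl inf_le_right, hIa y hyla hay]
  · have hxa_lt : x ⊓ a ≠ a := fun hh => hax (inf_eq_right.mp hh)
    by_cases hxa : x < a
    · have hxia : x ⊓ a = x := inf_eq_left.2 hxa.le
      by_cases hya : y < a
      · rw [if_pos ⟨hxa, hya⟩, hxia, inf_eq_left.2 hya.le, Fop, if_neg hxa.ne, if_neg hya.ne]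
      · by_cases hay : a ≤ y
        · rw [if_neg (fun hh => hya hh.2), if_pos (Or.inl ⟨hxa, hay, hy'⟩)]
          rw [hxia, inf_eq_right.2 hay, Fop, if_neg hxa.ne, if_pos rfl, inf_eq_left.2 (hxa.le.trans hay)]
        · have hyla : ¬ y ≤ a := fun hh => hya (lt_of_le_of_ne hh (fun he => hay (he ▸ le_refl a)))
          have hya_ne : y ⊓ a ≠ a := fun hh => hay (inf_eq_right.mp hh)
          rw [if_neg (fun hh => hya hh.2)]
          rw [if_neg (by rintro (⟨_, h1, _⟩ | ⟨⟨h1, _⟩, _⟩ | h1 | h1) <;> [exact hay h1; exact hax h1; exact hy h1; exact hx h1])]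
          rw [hxia, Fop, if_neg hxa.ne, if_neg hya_ne]
    · -- x incomparable with a
      have hxla : ¬ x ≤ a := fun hh => hxa (lt_of_le_of_ne hh (fun he => hax (he ▸ le_refl a)))
      rw [if_neg (fun hh => hxa hh.1)]
      by_cases hya : y < a
      · rw [if_neg (by rintro (⟨h1, _⟩ | ⟨⟨h1, _⟩, _⟩ | h1 | h1) <;> [exact hxa h1; exact hax h1; exact hy h1; exact hx h1])]
        rw [inf_eq_left.2 hya.le, Fop, if_neg hxa_lt, if_neg hya.ne]
      · by_cases hay : a ≤ y
        · rw [if_neg (by rintro (⟨h1, _⟩ | ⟨⟨h1, _⟩, _⟩ | h1 | h1) <;> [exact hxa h1; exact hax h1; exact hy h1; exact hx h1])]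
          rw [inf_eq_right.2 hay, hIa x hxla hax, Fop, if_neg hxa_lt, if_pos rfl]
        · have hya_ne : y ⊓ a ≠ a := fun hh => hay (inf_eq_right.mp hh)
          rw [if_neg (by rintro (⟨h1, _⟩ | ⟨⟨h1, _⟩, _⟩ | h1 | h1) <;> [exact hxa h1; exact hax h1; exact hy h1; exact hx h1])]
          rw [Fop, if_neg hxa_lt, if_neg hya_ne]

lemma ordinalSum_low_lt
    (hT₂comm : ∀ x y, x ≤ a → y ≤ a → T₂ x y = T₂ y x)
    (hT₂le : ∀ x y, x ≤ a → y ≤ a → T₂ x y ≤ x ⊓ y)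
    (hIa : ∀ z : L, ¬ z ≤ a → ¬ a ≤ z → T₂ (z ⊓ a) a = z ⊓ a)
    {x y : L} (hx : x ≠ ⊤) (hy : y ≠ ⊤) (h : ¬ (a ≤ x ∧ a ≤ y)) :
    ordinalSum a T₁ T₂ x y < a := by
  rw [ordinalSum_low a T₁ T₂ hT₂comm hIa hx hy h]
  have hle := Fop_le a T₂ hT₂le (inf_le_right : x ⊓ a ≤ a) (inf_le_right : y ⊓ a ≤ a)
  rcases not_and_or.mp h with h' | h'
  · exact lt_of_le_of_lt (hle.trans inf_le_left)
      (lt_of_le_of_ne inf_le_right (fun hh => h' (inf_eq_right.mp hh)))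
  · exact lt_of_le_of_lt (hle.trans inf_le_right)
      (lt_of_le_of_ne inf_le_right (fun hh => h' (inf_eq_right.mp hh)))

end Aux

/-- under the hypotheses of Theorem 5.2 (two t-subnorms with
`T₂(z ⊓ a, a) = z ⊓ a` for all `z` incomparable with `a`), the ordinal sum is associative. -/
theorem stmt_10 {L : Type*} [Lattice L] [BoundedOrder L] (a : L)
    (ha0 : a ≠ ⊥) (ha1 : a ≠ ⊤) (T₁ T₂ : L → L → L)
    (hT₁mem : ∀ x y, a ≤ x → a ≤ y → a ≤ T₁ x y)
    (hT₁comm : ∀ x y, a ≤ x → a ≤ y → T₁ x y = T₁ y x)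
    (hT₁assoc : ∀ x y z, a ≤ x → a ≤ y → a ≤ z → T₁ (T₁ x y) z = T₁ x (T₁ y z))
    (hT₁mono : ∀ x y z, a ≤ x → a ≤ y → a ≤ z → x ≤ y → T₁ x z ≤ T₁ y z ∧ T₁ z x ≤ T₁ z y)
    (hT₁le : ∀ x y, a ≤ x → a ≤ y → T₁ x y ≤ x ⊓ y)
    (hT₂mem : ∀ x y, x ≤ a → y ≤ a → T₂ x y ≤ a)
    (hT₂comm : ∀ x y, x ≤ a → y ≤ a → T₂ x y = T₂ y x)
    (hT₂assoc : ∀ x y z, x ≤ a → y ≤ a → z ≤ a → T₂ (T₂ x y) z = T₂ x (T₂ y z))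
    (hT₂mono : ∀ x y z, x ≤ a → y ≤ a → z ≤ a → x ≤ y → T₂ x z ≤ T₂ y z ∧ T₂ z x ≤ T₂ z y)
    (hT₂le : ∀ x y, x ≤ a → y ≤ a → T₂ x y ≤ x ⊓ y)
    (hIa : ∀ z : L, ¬ z ≤ a → ¬ a ≤ z → T₂ (z ⊓ a) a = z ⊓ a) :
    ∀ x y z : L, ordinalSum a T₁ T₂ x (ordinalSum a T₁ T₂ y z)
      = ordinalSum a T₁ T₂ (ordinalSum a T₁ T₂ x y) z := by
  classical
  intro x y z
  have ha' : a < ⊤ := lt_top_iff_ne_top.2 ha1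
  by_cases hx : x = ⊤
  · subst hx; rw [ordinalSum_top_left, ordinalSum_top_left]
  by_cases hz : z = ⊤
  · subst hz; rw [ordinalSum_top_right, ordinalSum_top_right]
  by_cases hy : y = ⊤
  · subst hy; rw [ordinalSum_top_left, ordinalSum_top_right]
  have hx' : x < ⊤ := lt_top_iff_ne_top.2 hx
  have hy' : y < ⊤ := lt_top_iff_ne_top.2 hy
  have hz' : z < ⊤ := lt_top_iff_ne_top.2 hz
  by_cases hyz : a ≤ y ∧ a ≤ z
  · obtain ⟨hay, haz⟩ := hyz
    have hyzT : ordinalSum a T₁ T₂ y z = T₁ y z := ordinalSum_AA a T₁ T₂ hay hy' haz hz'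
    have hmem : a ≤ T₁ y z := hT₁mem y z hay haz
    have hlt : T₁ y z < ⊤ := lt_of_le_of_lt ((hT₁le y z hay haz).trans inf_le_left) hy'
    by_cases hax : a ≤ x
    · -- all three in A: use T₁ associativity
      rw [hyzT, ordinalSum_AA a T₁ T₂ hax hx' hmem hlt,
        ordinalSum_AA a T₁ T₂ hax hx' hay hy',
        ordinalSum_AA a T₁ T₂ (hT₁mem x y hax hay)
          (lt_of_le_of_lt ((hT₁le x y hax hay).trans inf_le_left) hx') haz hz',
        hT₁assoc x y z hax hay haz]
    · -- x not above a
      have hnxy : ¬ (a ≤ x ∧ a ≤ y) := fun hh => hax hh.1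
      have hxyeq := ordinalSum_low a T₁ T₂ hT₂comm hIa hx hy hnxy
      have hxylt := ordinalSum_low_lt a T₁ T₂ hT₂comm hT₂le hIa hx hy hnxy
      have hxyne : ordinalSum a T₁ T₂ x y ≠ ⊤ := (hxylt.trans ha').ne
      have e1 : ordinalSum a T₁ T₂ x (T₁ y z) = Fop a T₂ (x ⊓ a) a := by
        rw [ordinalSum_low a T₁ T₂ hT₂comm hIa hx hlt.ne (fun hh => hax hh.1),
          inf_eq_right.2 hmem]
      have e2 : ordinalSum a T₁ T₂ x y = Fop a T₂ (x ⊓ a) a := by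
        rw [hxyeq, inf_eq_right.2 hay]
      have e2lt : Fop a T₂ (x ⊓ a) a < a := e2 ▸ hxylt
      have e3 : ordinalSum a T₁ T₂ (ordinalSum a T₁ T₂ x y) z
          = Fop a T₂ (Fop a T₂ (x ⊓ a) a) a := by
        rw [ordinalSum_low a T₁ T₂ hT₂comm hIa hxyne hz (fun hh => hxylt.not_ge hh.1),
          inf_eq_right.2 haz, e2, inf_eq_left.2 e2lt.le]
      rw [hyzT, e1, e3, Fop_assoc a T₂ hT₂assoc hT₂le inf_le_right le_rfl le_rfl,
        Fop_pos a T₂ a rfl]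
  · -- ¬ (a ≤ y ∧ a ≤ z)
    have hyzeq := ordinalSum_low a T₁ T₂ hT₂comm hIa hy hz hyz
    have hyzlt := ordinalSum_low_lt a T₁ T₂ hT₂comm hT₂le hIa hy hz hyz
    have hyzne : ordinalSum a T₁ T₂ y z ≠ ⊤ := (hyzlt.trans ha').ne
    by_cases hxy : a ≤ x ∧ a ≤ y
    · obtain ⟨hax, hay⟩ := hxy
      have haz : ¬ a ≤ z := fun hh => hyz ⟨hay, hh⟩
      have hxyT : ordinalSum a T₁ T₂ x y = T₁ x y := ordinalSum_AA a T₁ T₂ hax hx' hay hy'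
      have hmem : a ≤ T₁ x y := hT₁mem x y hax hay
      have hlt : T₁ x y < ⊤ := lt_of_le_of_lt ((hT₁le x y hax hay).trans inf_le_left) hx'
      have e1 : ordinalSum a T₁ T₂ x (ordinalSum a T₁ T₂ y z) = z ⊓ a := by
        rw [ordinalSum_low a T₁ T₂ hT₂comm hIa hx hyzne (fun hh => hyzlt.not_ge hh.2),
          inf_eq_right.2 hax, inf_eq_left.2 hyzlt.le, hyzeq, inf_eq_right.2 hay,
          Fop_pos a T₂ _ rfl, Fop_pos a T₂ _ rfl]
      have e2 : ordinalSum a T₁ T₂ (T₁ x y) z = z ⊓ a := by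
        rw [ordinalSum_low a T₁ T₂ hT₂comm hIa hlt.ne hz (fun hh => haz hh.2),
          inf_eq_right.2 hmem, Fop_pos a T₂ _ rfl]
      rw [hxyT, e1, e2]
    · have hxyeq := ordinalSum_low a T₁ T₂ hT₂comm hIa hx hy hxy
      have hxylt := ordinalSum_low_lt a T₁ T₂ hT₂comm hT₂le hIa hx hy hxy
      have hxyne : ordinalSum a T₁ T₂ x y ≠ ⊤ := (hxylt.trans ha').ne
      rw [ordinalSum_low a T₁ T₂ hT₂comm hIa hx hyzne (fun hh => hyzlt.not_ge hh.2),
        ordinalSum_low a T₁ T₂ hT₂comm hIa hxyne hz (fun hh => hxylt.not_ge hh.1),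
        inf_eq_left.2 hyzlt.le, hyzeq, inf_eq_left.2 hxylt.le, hxyeq,
        Fop_assoc a T₂ hT₂assoc hT₂le inf_le_right inf_le_right inf_le_right]
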